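/- arXiv:2501.03367 — 4 statements merged into one kernel-verified Lean document; each statement's English description precedes it below -/
import Mathlib

section
/- For every θ ∈ ℝ^J, φ ∈ ℝ^K and j ∈ {1,…,J}, the real-valued map s ↦ D(η‖ω(θ⟨j↦s⟩, φ)) is differentiable at s = θ_j with derivative ⟨G_j⟩_{η(φ)} − ⟨G_j⟩_{ρ(θ)}, i.e., Tr[G_j η(φ)] − Tr[G_j ρ(θ)] (both traces are real). -/
open MeasureTheory Matrix
open scoped ComplexOrder

noncomputable section

attribute [local instance] Matrix.normedAddCommGroup Matrix.normedSpace

/-- Square complex matrices. -/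
abbrev Mat (n : ℕ) := Matrix (Fin n) (Fin n) ℂ

/-- The parameterized Hamiltonian `G(θ) = ∑ j, θ j • G j`. -/
def Gm {n J : ℕ} (G : Fin J → Mat n) (θ : Fin J → ℝ) : Mat n := ∑ j, (θ j : ℂ) • G j

/-- The parameterized Hamiltonian `H(φ) = ∑ k, φ k • H k`. -/
def Hm {n K : ℕ} (H : Fin K → Mat n) (φ : Fin K → ℝ) : Mat n := ∑ k, (φ k : ℂ) • H k

/-- The partition function `Z(θ) = Tr[exp (−G(θ))]` (a positive real). -/
def Zpf {n J : ℕ} (G : Fin J → Mat n) (θ : Fin J → ℝ) : ℝ :=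
  (Matrix.trace (NormedSpace.exp (-(Gm G θ)))).re

/-- The quantum Boltzmann machine `ρ(θ) = exp(−G(θ))/Z(θ)`. -/
def qbm {n J : ℕ} (G : Fin J → Mat n) (θ : Fin J → ℝ) : Mat n :=
  ((Zpf G θ : ℂ))⁻¹ • NormedSpace.exp (-(Gm G θ))

/-- The unitary `exp(−i H(φ))`. -/
def uH {n K : ℕ} (H : Fin K → Mat n) (φ : Fin K → ℝ) : Mat n :=
  NormedSpace.exp (-(Complex.I • Hm H φ))

/-- The unitary `exp(i H(φ))`. -/
def uH' {n K : ℕ} (H : Fin K → Mat n) (φ : Fin K → ℝ) : Mat n :=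
  NormedSpace.exp (Complex.I • Hm H φ)

/-- The evolved quantum Boltzmann machine `ω(θ,φ) = exp(−iH(φ)) ρ(θ) exp(iH(φ))`. -/
def eqbm {n J K : ℕ} (G : Fin J → Mat n) (H : Fin K → Mat n)
    (θ : Fin J → ℝ) (φ : Fin K → ℝ) : Mat n :=
  uH H φ * qbm G θ * uH' H φ

/-- The matrix logarithm of a Hermitian matrix, obtained by applying the real logarithm to
the eigenvalues in a spectral decomposition (junk value `0` for non-Hermitian matrices). -/
def mlog {n : ℕ} (A : Mat n) : Mat n :=
  if hA : A.IsHermitian then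
    (hA.eigenvectorUnitary : Mat n) *
      Matrix.diagonal (fun i => (Real.log (hA.eigenvalues i) : ℂ)) *
      star (hA.eigenvectorUnitary : Mat n)
  else 0

/-- The quantum relative entropy `D(ω‖τ) = Tr[ω (ln ω − ln τ)]` (a real number). -/
def relEnt {n : ℕ} (A B : Mat n) : ℝ :=
  (Matrix.trace (A * (mlog A - mlog B))).re

/-! Since `ρ(θ) = exp(-G(θ) - ln Z(θ))` and `exp(-iH(φ))` is unitary,
`ω(θ,φ) = exp(-e^{-iH(φ)} G(θ) e^{iH(φ)} - ln Z(θ))`, so the logarithm of `ω` is explicit and,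
using `Tr η = 1`, `D(η‖ω(θ,φ)) = Tr[η ln η] + ln Z(θ) + Tr[G(θ) η(φ)]`. The last term is affine in
`θ_j` with slope `Tr[G_j η(φ)]`. For the partition function, cyclicity of the trace collapses the
termwise derivative of the exponential series to `d/ds Tr[exp(A + sB)] = Tr[B exp(A + sB)]`, so
`∂_j ln Z(θ) = -Tr[G_j e^{-G(θ)}] / Z(θ) = -Tr[G_j ρ(θ)]`. -/

section TracialExp

open NormedSpace
open scoped Nat

variable {𝔸 F : Type*} [NormedRing 𝔸] [NormedAlgebra ℝ 𝔸]
  [NormedAddCommGroup F] [NormedSpace ℝ F]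
  {τ : 𝔸 →L[ℝ] F}

theorem hasSum_map_mul_exp_series_deriv [CompleteSpace 𝔸] (B X : 𝔸) :
    HasSum (fun k : ℕ => ((k ! : ℝ)⁻¹ * k) • τ (B * X ^ (k - 1))) (τ (B * exp X)) := by
  rw [← hasSum_nat_add_iff' 1]
  simpa [Nat.factorial_succ, mul_smul_comm, mul_assoc, inv_mul_cancel₀,
    Nat.cast_add_one_ne_zero] using
    (exp_series_hasSum_exp' (𝕂 := ℝ) X).mapL (τ.comp (ContinuousLinearMap.mul ℝ 𝔸 B))

theorem norm_map_mul_pow_le [NormOneClass 𝔸] (B : 𝔸) {X : 𝔸} {r : ℝ} (hX : ‖X‖ ≤ r) (k : ℕ) :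
    ‖τ (B * X ^ k)‖ ≤ ‖τ‖ * ‖B‖ * r ^ k := by
  calc ‖τ (B * X ^ k)‖ ≤ ‖τ‖ * (‖B‖ * ‖X‖ ^ k) :=
        τ.le_opNorm_of_le <| (norm_mul_le _ _).trans <|
          mul_le_mul_of_nonneg_left (norm_pow_le _ _) (norm_nonneg _)
    _ ≤ ‖τ‖ * ‖B‖ * r ^ k := by
        rw [← mul_assoc]; gcongr

variable (hτ : ∀ x y, τ (x * y) = τ (y * x))
include hτ

theorem hasDerivAt_tracial_pow_add_smul (A B : 𝔸) (k : ℕ) (s : ℝ) :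
    HasDerivAt (fun s : ℝ => τ ((A + s • B) ^ k)) (k • τ (B * (A + s • B) ^ (k - 1))) s := by
  have hline : HasDerivAt (fun s : ℝ => A + s • B) B s := by
    simpa using ((hasDerivAt_id s).smul_const B).const_add A
  refine (τ.hasFDerivAt.comp_hasDerivAt s (hline.fun_pow' k)).congr_deriv ?_
  have hcyc : ∀ i ∈ Finset.range k, τ ((A + s • B) ^ (k.pred - i) * B * (A + s • B) ^ i)
      = τ (B * (A + s • B) ^ (k - 1)) := fun i hi => by
    rw [hτ, ← mul_assoc, ← pow_add, Nat.pred_eq_sub_one,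
      Nat.add_sub_of_le (Nat.le_sub_one_of_lt (Finset.mem_range.mp hi)), hτ]
  rw [map_sum, Finset.sum_congr rfl hcyc, Finset.sum_const, Finset.card_range]

theorem hasDerivAt_tracial_exp_add_smul [NormOneClass 𝔸] [CompleteSpace 𝔸] [CompleteSpace F]
    (A B : 𝔸) (s₀ : ℝ) :
    HasDerivAt (fun s : ℝ => τ (exp (A + s • B))) (τ (B * exp (A + s₀ • B))) s₀ := by
  set r : ℝ := ‖A‖ + (|s₀| + 1) * ‖B‖
  set g : ℕ → ℝ → F := fun k s => τ ((k ! : ℝ)⁻¹ • (A + s • B) ^ k)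
  set g' : ℕ → ℝ → F := fun k s => ((k ! : ℝ)⁻¹ * k) • τ (B * (A + s • B) ^ (k - 1))
  set u : ℕ → ℝ := fun k => (k ! : ℝ)⁻¹ * k * (‖τ‖ * ‖B‖ * r ^ (k - 1))
  have hg : ∀ k s, HasDerivAt (g k) (g' k s) s := fun k s => by
    convert (hasDerivAt_tracial_pow_add_smul hτ A B k s).const_smul (k ! : ℝ)⁻¹ using 1
    · ext t; simp [g]
    · simp [g', mul_smul, Nat.cast_smul_eq_nsmul]
  have hnorm : ∀ s ∈ Metric.ball s₀ 1, ‖A + s • B‖ ≤ r := fun s hs => by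
    have hs' : |s| ≤ |s₀| + 1 := by
      have := abs_sub_abs_le_abs_sub s s₀
      rw [Metric.mem_ball, Real.dist_eq] at hs
      linarith
    calc ‖A + s • B‖ ≤ ‖A‖ + |s| * ‖B‖ := by
          simpa [norm_smul] using norm_add_le A (s • B)
      _ ≤ r := by simp only [r]; gcongr
  have hbound : ∀ k, ∀ s ∈ Metric.ball s₀ 1, ‖g' k s‖ ≤ u k := fun k s hs => by
    simp only [g', u, norm_smul, Real.norm_eq_abs]
    rw [abs_of_nonneg (by positivity)]
    exact mul_le_mul_of_nonneg_left (norm_map_mul_pow_le B (hnorm s hs) _) (by positivity)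
  have hu : Summable u := by
    rw [← summable_nat_add_iff 1]
    refine ((Real.summable_pow_div_factorial r).mul_left (‖τ‖ * ‖B‖)).congr fun k => ?_
    simp only [u, Nat.factorial_succ, Nat.add_sub_cancel]
    push_cast
    field_simp
  have hexp : ∀ s, HasSum (fun k => g k s) (τ (exp (A + s • B))) := fun s =>
    (exp_series_hasSum_exp' (𝕂 := ℝ) (A + s • B)).mapL τ
  have hderiv : HasSum (fun k => g' k s₀) (τ (B * exp (A + s₀ • B))) :=
    hasSum_map_mul_exp_series_deriv B (A + s₀ • B)
  have hmem : s₀ ∈ Metric.ball s₀ 1 := Metric.mem_ball_self one_pos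
  have := hasDerivAt_tsum_of_isPreconnected hu Metric.isOpen_ball
    (convex_ball s₀ 1).isPreconnected (fun k s _ => hg k s) hbound hmem (hexp s₀).summable hmem
  rw [hderiv.tsum_eq] at this
  exact this.congr_of_eventuallyEq (Filter.Eventually.of_forall fun s => (hexp s).tsum_eq.symm)

end TracialExp

namespace Matrix

variable {m 𝕜 : Type*} [Fintype m] [DecidableEq m] [RCLike 𝕜]

theorem IsHermitian.trace_cfc {A : Matrix m m 𝕜} (hA : A.IsHermitian) (f : ℝ → ℝ) :
    trace (cfc f A) = ∑ i, (f (hA.eigenvalues i) : 𝕜) := by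
  rw [hA.cfc_eq, IsHermitian.cfc, Unitary.conjStarAlgAut_apply, trace_mul_cycle,
    Unitary.coe_star_mul_self, one_mul, trace_diagonal]
  rfl

section LinftyOpNorm

open scoped Norms.Operator

theorem exp_algebraMap (r : ℝ) :
    NormedSpace.exp (algebraMap ℝ (Matrix m m 𝕜) r) = algebraMap ℝ (Matrix m m 𝕜) (Real.exp r) := by
  rw [Real.exp_eq_exp_ℝ]
  exact (NormedSpace.algebraMap_exp_comm r).symm

-- The functional calculus instance is passed by hand: the operator-norm topology is defeq to the
-- product topology it is declared for, but not reducibly so.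
theorem IsHermitian.cfc_exp {A : Matrix m m 𝕜} (hA : A.IsHermitian) :
    cfc Real.exp A = NormedSpace.exp A :=
  @CFC.real_exp_eq_normedSpace_exp _ _ _ _ instContinuousFunctionalCalculus _ hA

theorem IsHermitian.cfc_log_exp {A : Matrix m m 𝕜} (hA : A.IsHermitian) :
    cfc Real.log (NormedSpace.exp A) = A :=
  @CFC.log_exp _ _ _ _ instContinuousFunctionalCalculus _ hA

theorem hasDerivAt_re_trace_exp_add_smul [Nonempty m] (A B : Matrix m m 𝕜) (s₀ : ℝ) :
    HasDerivAt (fun s : ℝ => RCLike.re (trace (NormedSpace.exp (A + s • B))))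
      (RCLike.re (trace (B * NormedSpace.exp (A + s₀ • B)))) s₀ :=
  hasDerivAt_tracial_exp_add_smul
    (τ := LinearMap.toContinuousLinearMap
      (RCLike.reLm.comp ((traceLinearMap m 𝕜 𝕜).restrictScalars ℝ)))
    (fun X Y => by simp [trace_mul_comm X Y]) A B s₀

end LinftyOpNorm

theorem IsHermitian.re_trace_exp_pos [Nonempty m] {A : Matrix m m 𝕜} (hA : A.IsHermitian) :
    0 < RCLike.re (trace (NormedSpace.exp A)) := by
  rw [← hA.cfc_exp, hA.trace_cfc, map_sum]
  simpa using Finset.sum_pos (fun i _ => Real.exp_pos (hA.eigenvalues i)) Finset.univ_nonempty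

end Matrix

section QuantumBoltzmannMachine

variable {n J K : ℕ}

theorem isHermitian_sum_ofReal_smul {ι : Type*} [Fintype ι] {M : ι → Mat n}
    (hM : ∀ i, (M i).IsHermitian) (c : ι → ℝ) : (∑ i, (c i : ℂ) • M i).IsHermitian :=
  isSelfAdjoint_sum _ fun i _ => (hM i).smul (Complex.conj_ofReal (c i))

theorem isHermitian_Gm {G : Fin J → Mat n} (hG : ∀ j, (G j).IsHermitian) (θ : Fin J → ℝ) :
    (Gm G θ).IsHermitian :=
  isHermitian_sum_ofReal_smul hG θ

theorem isHermitian_Hm {H : Fin K → Mat n} (hH : ∀ k, (H k).IsHermitian) (φ : Fin K → ℝ) :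
    (Hm H φ).IsHermitian :=
  isHermitian_sum_ofReal_smul hH φ

theorem uH_mul_uH' (H : Fin K → Mat n) (φ : Fin K → ℝ) : uH H φ * uH' H φ = 1 := by
  rw [uH, uH', ← Matrix.exp_add_of_commute _ _ ((Commute.refl (Complex.I • Hm H φ)).neg_left),
    neg_add_cancel, NormedSpace.exp_zero]

theorem conjTranspose_uH {H : Fin K → Mat n} (hH : ∀ k, (H k).IsHermitian) (φ : Fin K → ℝ) :
    (uH H φ)ᴴ = uH' H φ := by
  rw [uH, uH', ← Matrix.exp_conjTranspose, conjTranspose_neg, conjTranspose_smul,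
    (isHermitian_Hm hH φ).eq, Complex.star_def, Complex.conj_I, neg_smul, neg_neg]

theorem Zpf_pos (hn : 1 ≤ n) {G : Fin J → Mat n} (hG : ∀ j, (G j).IsHermitian) (θ : Fin J → ℝ) :
    0 < Zpf G θ :=
  have : Nonempty (Fin n) := ⟨⟨0, hn⟩⟩
  (isHermitian_Gm hG θ).neg.re_trace_exp_pos

theorem mlog_eq_cfc {A : Mat n} (hA : A.IsHermitian) : mlog A = cfc Real.log A := by
  rw [mlog, dif_pos hA, hA.cfc_eq, IsHermitian.cfc, Unitary.conjStarAlgAut_apply]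
  rfl

theorem mlog_exp {X : Mat n} (hX : X.IsHermitian) : mlog (NormedSpace.exp X) = X := by
  rw [mlog_eq_cfc hX.exp, hX.cfc_log_exp]

theorem qbm_eq_exp (hn : 1 ≤ n) {G : Fin J → Mat n} (hG : ∀ j, (G j).IsHermitian)
    (θ : Fin J → ℝ) :
    qbm G θ = NormedSpace.exp (-Gm G θ - algebraMap ℝ (Mat n) (Real.log (Zpf G θ))) := by
  rw [sub_eq_add_neg, ← map_neg,
    Matrix.exp_add_of_commute _ _ (Algebra.commute_algebraMap_right _ _), Matrix.exp_algebraMap,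
    Real.exp_neg, Real.exp_log (Zpf_pos hn hG θ), ← Algebra.commutes,
    ← Algebra.smul_def, qbm, ← Complex.ofReal_inv, Complex.coe_smul]

theorem mlog_eqbm (hn : 1 ≤ n) {G : Fin J → Mat n} {H : Fin K → Mat n}
    (hG : ∀ j, (G j).IsHermitian) (hH : ∀ k, (H k).IsHermitian) (θ : Fin J → ℝ)
    (φ : Fin K → ℝ) :
    mlog (eqbm G H θ φ)
      = -(uH H φ * Gm G θ * uH' H φ) - algebraMap ℝ (Mat n) (Real.log (Zpf G θ)) := by
  set Y := -Gm G θ - algebraMap ℝ (Mat n) (Real.log (Zpf G θ))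
  have hY : Y.IsHermitian := (isHermitian_Gm hG θ).neg.sub (IsSelfAdjoint.algebraMap _ (.all _))
  have hinv : uH' H φ = (uH H φ)⁻¹ := (Matrix.inv_eq_right_inv (uH_mul_uH' H φ)).symm
  have hconj : eqbm G H θ φ = NormedSpace.exp (uH H φ * Y * uH' H φ) := by
    rw [eqbm, qbm_eq_exp hn hG, hinv]
    exact (Matrix.exp_conj (uH H φ) Y (Matrix.isUnit_exp _)).symm
  have hconjY : (uH H φ * Y * uH' H φ).IsHermitian := by
    simpa [conjTranspose_uH hH] using isHermitian_mul_mul_conjTranspose (uH H φ) hY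
  rw [hconj, mlog_exp hconjY]
  simp only [Y, mul_sub, sub_mul, neg_mul, mul_neg, ← Algebra.commutes, mul_assoc, uH_mul_uH',
    mul_one]

theorem relEnt_eqbm (hn : 1 ≤ n) {G : Fin J → Mat n} {H : Fin K → Mat n}
    (hG : ∀ j, (G j).IsHermitian) (hH : ∀ k, (H k).IsHermitian) {η : Mat n}
    (hηtr : η.trace = 1) (θ : Fin J → ℝ) (φ : Fin K → ℝ) :
    relEnt η (eqbm G H θ φ) = (trace (η * mlog η)).re + Real.log (Zpf G θ)
      + (trace (Gm G θ * (uH' H φ * η * uH H φ))).re := by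
  have hcyc : trace (η * (uH H φ * Gm G θ * uH' H φ))
      = trace (Gm G θ * (uH' H φ * η * uH H φ)) := by
    simp only [← mul_assoc]
    rw [trace_mul_cycle, trace_mul_cycle, ← mul_assoc]
  have hexpand : η * (mlog η - (-(uH H φ * Gm G θ * uH' H φ)
        - algebraMap ℝ (Mat n) (Real.log (Zpf G θ))))
      = η * mlog η + Real.log (Zpf G θ) • η + η * (uH H φ * Gm G θ * uH' H φ) := by
    rw [Algebra.smul_def, Algebra.commutes]
    noncomm_ring
  rw [relEnt, mlog_eqbm hn hG hH, hexpand, trace_add, trace_add, trace_smul, hcyc, hηtr]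
  simp

theorem Gm_update (G : Fin J → Mat n) (θ : Fin J → ℝ) (j : Fin J) (s : ℝ) :
    Gm G (Function.update θ j s) = Gm G θ + (s - θ j) • G j := by
  have hrest : ∀ i ∈ Finset.univ.erase j,
      (Function.update θ j s i : ℂ) • G i = (θ i : ℂ) • G i := fun i hi => by
    rw [Function.update_of_ne (Finset.ne_of_mem_erase hi)]
  rw [Gm, Gm, ← Finset.add_sum_erase _ _ (Finset.mem_univ j),
    ← Finset.add_sum_erase _ _ (Finset.mem_univ j), Finset.sum_congr rfl hrest,
    Function.update_self, ← Complex.coe_smul, Complex.ofReal_sub, sub_smul]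
  abel

theorem hasDerivAt_Zpf_update (hn : 1 ≤ n) (G : Fin J → Mat n) (θ : Fin J → ℝ) (j : Fin J) :
    HasDerivAt (fun s => Zpf G (Function.update θ j s))
      (-(trace (G j * NormedSpace.exp (-Gm G θ))).re) (θ j) := by
  have : Nonempty (Fin n) := ⟨⟨0, hn⟩⟩
  have h := (Matrix.hasDerivAt_re_trace_exp_add_smul (-Gm G θ) (-G j) (θ j - θ j)).comp_sub_const
    (θ j) (θ j)
  have hZfun : (fun s => Zpf G (Function.update θ j s))
      = fun s => RCLike.re (trace (NormedSpace.exp (-Gm G θ + (s - θ j) • -G j))) := by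
    ext s
    rw [Zpf, Gm_update, neg_add, smul_neg]
    rfl
  rw [hZfun]
  refine h.congr_deriv ?_
  simp

theorem re_trace_mul_qbm (A : Mat n) (G : Fin J → Mat n) (θ : Fin J → ℝ) :
    (trace (A * qbm G θ)).re = (Zpf G θ)⁻¹ * (trace (A * NormedSpace.exp (-Gm G θ))).re := by
  rw [qbm, mul_smul_comm, trace_smul, smul_eq_mul, ← Complex.ofReal_inv, Complex.re_ofReal_mul]

end QuantumBoltzmannMachine

theorem stmt1_general {n J K : ℕ} (hn : 1 ≤ n)
    (G : Fin J → Mat n) (H : Fin K → Mat n)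
    (hG : ∀ j, (G j).IsHermitian) (hH : ∀ k, (H k).IsHermitian)
    (η : Mat n) (hηtr : η.trace = 1)
    (θ : Fin J → ℝ) (φ : Fin K → ℝ) (j : Fin J) :
    HasDerivAt (fun s : ℝ => relEnt η (eqbm G H (Function.update θ j s) φ))
      ((Matrix.trace (G j * (uH' H φ * η * uH H φ))).re
        - (Matrix.trace (G j * qbm G θ)).re) (θ j) := by
  set ηφ := uH' H φ * η * uH H φ
  have hrel : ∀ s, relEnt η (eqbm G H (Function.update θ j s) φ)
      = (trace (η * mlog η)).re + Real.log (Zpf G (Function.update θ j s))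
        + ((trace (Gm G θ * ηφ)).re + (s - θ j) * (trace (G j * ηφ)).re) := fun s => by
    rw [relEnt_eqbm hn hG hH hηtr, Gm_update, add_mul, trace_add, Complex.add_re, smul_mul_assoc,
      trace_smul, Complex.real_smul, Complex.re_ofReal_mul]
  have hlogZ := (hasDerivAt_Zpf_update hn G θ j).log
    (by simpa using (Zpf_pos hn hG θ).ne')
  have hlin : HasDerivAt
      (fun s : ℝ => (trace (Gm G θ * ηφ)).re + (s - θ j) * (trace (G j * ηφ)).re)
      (trace (G j * ηφ)).re (θ j) := by
    simpa using (((hasDerivAt_id (θ j)).sub_const (θ j)).mul_const (trace (G j * ηφ)).re).const_add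
      (trace (Gm G θ * ηφ)).re
  rw [funext hrel, re_trace_mul_qbm]
  refine ((hlogZ.const_add (trace (η * mlog η)).re).add hlin).congr_deriv ?_
  rw [Function.update_eq_self]
  ring

/-- Gradient of the quantum relative entropy with respect to the `θ` parameters:
`s ↦ D(η‖ω(θ⟨j↦s⟩, φ))` is differentiable at `s = θ j` with derivative
`⟨G_j⟩_{η(φ)} − ⟨G_j⟩_{ρ(θ)} = Tr[G_j η(φ)] − Tr[G_j ρ(θ)]` (both traces are real). -/
theorem stmt1 {n J K : ℕ} (hn : 1 ≤ n) (hJ : 1 ≤ J) (hK : 1 ≤ K)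
    (G : Fin J → Mat n) (H : Fin K → Mat n)
    (hG : ∀ j, (G j).IsHermitian) (hH : ∀ k, (H k).IsHermitian)
    (η : Mat n) (hη : η.PosDef) (hηtr : η.trace = 1)
    (θ : Fin J → ℝ) (φ : Fin K → ℝ) (j : Fin J) :
    HasDerivAt (fun s : ℝ => relEnt η (eqbm G H (Function.update θ j s) φ))
      ((Matrix.trace (G j * (uH' H φ * η * uH H φ))).re
        - (Matrix.trace (G j * qbm G θ)).re) (θ j) :=
  stmt1_general hn G H hG hH η hηtr θ φ j
end
end

section
/- Fix γ ∈ ℝ^L and a direction u ∈ ℝ^L, and assume the maps ε ↦ −2·ln F(σ(γ), σ(γ+ε)) and ε ↦ −2·ln F_H(σ(γ), σ(γ+ε)) are twice continuously differentiable on a neighborhood of ε = 0. Writing f_FB(s) := −2·ln F(σ(γ), σ(γ+s·u)) and f_WY(s) := −2·ln F_H(σ(γ), σ(γ+s·u)), the second derivatives at s = 0 satisfy f_WY''(0) ≥ f_FB''(0) ≥ (1/2)·f_WY''(0); that is, the Wigner–Yanase and Fisher–Bures information matrices of the family satisfy I^WY(γ) ⪰ I^FB(γ) ⪰ (1/2)·I^WY(γ)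 in the Loewner order. -/
open MeasureTheory Matrix
open scoped ComplexOrder Classical

noncomputable section

attribute [local instance] Matrix.normedAddCommGroup Matrix.normedSpace

/-- The positive semidefinite square root of a positive semidefinite matrix
(junk value `0` otherwise). -/
def msqrt {n : ℕ} (A : Mat n) : Mat n := if h : A.PosSemidef then
  (h.1.eigenvectorUnitary : Mat n) * diagonal ((↑) ∘ Real.sqrt ∘ h.1.eigenvalues) *
    (star (h.1.eigenvectorUnitary : Mat n)) else 0

/-- The Uhlmann fidelity `F(ω,τ) = (Tr[√(√ω τ √ω)])²`. -/
def uFid {n : ℕ} (A B : Mat n) : ℝ := ((msqrt (msqrt A * B * msqrt A)).trace).re ^ 2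

/-- The Holevo fidelity `F_H(ω,τ) = (Tr[√ω √τ])²`. -/
def hFid {n : ℕ} (A B : Mat n) : ℝ := ((msqrt A * msqrt B).trace).re ^ 2

/-- The standard basis vector `e_i` of `ℝ^L`. -/
def stdBasis {L : ℕ} (i : Fin L) : Fin L → ℝ := Pi.single i 1

/-- The mixed second partial derivative `∂²g/∂ε_i∂ε_j` at `0`: the derivative at `0` of
`s ↦ (derivative at 0 of t ↦ g (s·e_i + t·e_j))`. -/
def mixed2 {L : ℕ} (g : (Fin L → ℝ) → ℝ) (i j : Fin L) : ℝ :=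
  deriv (fun s : ℝ => deriv (fun t : ℝ => g (s • stdBasis i + t • stdBasis j)) 0) 0

/-- `⟨x, y⟩ = ∑ m, conj (x m) * y m`. -/
def dotc {n : ℕ} (x y : Fin n → ℂ) : ℂ := ∑ m, (starRingEnd ℂ) (x m) * y m

/-!
Write `M = √σ √τ`, so that `F(σ,τ) = (Tr |M*|)²` and `F_H(σ,τ) = (Re Tr M)²`. The polar
decomposition `M V = |M*|` (`V` unitary) and the Cauchy–Schwarz inequality for the
Hilbert–Schmidt inner product give `|Tr M| ≤ Tr |M*|`, and, splitting
`M = σ^{1/4} σ^{1/4} τ^{1/4} τ^{1/4}`, also `(Tr |M*|)² ≤ Re Tr M · ‖√σ‖₂ ‖√τ‖₂ = Re Tr M`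
for states. Hence `F_H ≤ F` and `F² ≤ F_H`, i.e. `f_FB ≤ f_WY ≤ 2 f_FB` along the curve, with
equality at `s = 0`. A difference of two `C²` functions that is nonnegative and vanishes at `0`
has a local minimum there, so its second derivative at `0` is nonnegative.
-/
section MatrixSqrt

open scoped MatrixOrder

variable {n : ℕ} {A : Mat n}

theorem msqrt_eq_cfcSqrt (hA : A.PosSemidef) : msqrt A = CFC.sqrt A := by
  rw [CFC.sqrt_eq_real_sqrt A hA.nonneg, cfcₙ_eq_cfc (hf := Real.continuous_sqrt.continuousOn)
    (hf0 := Real.sqrt_zero), hA.1.cfc_eq, msqrt, dif_pos hA]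
  rfl

theorem posSemidef_msqrt (hA : A.PosSemidef) : (msqrt A).PosSemidef := by
  rw [msqrt_eq_cfcSqrt hA]
  exact nonneg_iff_posSemidef.mp (CFC.sqrt_nonneg A)

theorem posDef_msqrt (hA : A.PosDef) : (msqrt A).PosDef := by
  rw [msqrt_eq_cfcSqrt hA.posSemidef]
  exact (hA.isStrictlyPositive.sqrt).posDef

theorem msqrt_mul_msqrt (hA : A.PosSemidef) : msqrt A * msqrt A = A := by
  rw [msqrt_eq_cfcSqrt hA]
  exact CFC.sqrt_mul_sqrt_self A hA.nonneg

theorem msqrt_eq_of_mul_self_eq {B : Mat n} (hB : B.PosSemidef) (hBA : B * B = A) :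
    msqrt A = B := by
  have hA : A.PosSemidef := by
    rw [← hBA]; nth_rewrite 1 [← hB.1.eq]; exact posSemidef_conjTranspose_mul_self B
  rw [msqrt_eq_cfcSqrt hA]
  exact CFC.sqrt_unique hBA hB.nonneg

end MatrixSqrt

section HilbertSchmidt

variable {m 𝕜 : Type*} [Fintype m] [RCLike 𝕜]

theorem norm_trace_mul_le (X Y : Matrix m m 𝕜) :
    ‖(X * Y).trace‖ ≤ √(RCLike.re (X * Xᴴ).trace) * √(RCLike.re (Yᴴ * Y).trace) := by
  let _ := (1 : Matrix m m 𝕜).toMatrixSeminormedAddCommGroup PosSemidef.one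
  let _ := (1 : Matrix m m 𝕜).toMatrixInnerProductSpace PosSemidef.one
  have hinner (Z W : Matrix m m 𝕜) : inner 𝕜 Z W = (W * Zᴴ).trace := by
    change (W * 1 * Zᴴ).trace = _
    rw [Matrix.mul_one]
  have := norm_inner_le_norm (𝕜 := 𝕜) Yᴴ X
  rw [norm_eq_sqrt_re_inner (𝕜 := 𝕜) Yᴴ, norm_eq_sqrt_re_inner (𝕜 := 𝕜) X, mul_comm] at this
  simpa only [hinner, conjTranspose_conjTranspose] using this

theorem Matrix.PosSemidef.re_trace_nonneg {A : Matrix m m 𝕜} (hA : A.PosSemidef) :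
    0 ≤ RCLike.re A.trace :=
  (RCLike.nonneg_iff.mp hA.trace_nonneg).1

theorem norm_trace_mul_unitary_conj_le [DecidableEq m] {C D V : Matrix m m 𝕜}
    (hC : C.IsHermitian) (hD : D.IsHermitian) (hV : V ∈ unitaryGroup m 𝕜) :
    ‖(C * (Vᴴ * D * V)).trace‖ ≤ √(RCLike.re (C * C).trace) * √(RCLike.re (D * D).trace) := by
  have hVV : V * Vᴴ = 1 := mem_unitaryGroup_iff.mp hV
  have hDV : (Vᴴ * D * V)ᴴ * (Vᴴ * D * V) = Vᴴ * (D * D) * V := by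
    rw [conjTranspose_mul, conjTranspose_mul, hD.eq, conjTranspose_conjTranspose]
    calc Vᴴ * (D * V) * (Vᴴ * D * V) = Vᴴ * D * (V * Vᴴ) * D * V := by simp only [Matrix.mul_assoc]
      _ = Vᴴ * (D * D) * V := by rw [hVV, Matrix.mul_one, Matrix.mul_assoc Vᴴ]
  have := norm_trace_mul_le C (Vᴴ * D * V)
  rwa [hC.eq, hDV, trace_mul_cycle, hVV, Matrix.one_mul] at this

theorem norm_trace_mul_unitary_sq_le [DecidableEq m] {P Q V : Matrix m m 𝕜}
    (hP : P.IsHermitian) (hQ : Q.IsHermitian) (hV : V ∈ unitaryGroup m 𝕜) :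
    ‖(P * P * (Q * Q) * V).trace‖ ^ 2 ≤ RCLike.re (P * P * (Q * Q)).trace *
      (√(RCLike.re (P * P * (P * P)).trace) * √(RCLike.re (Q * Q * (Q * Q)).trace)) := by
  have hX : (P * Q * (P * Q)ᴴ).trace = (P * P * (Q * Q)).trace := by
    rw [conjTranspose_mul, hP.eq, hQ.eq,
      show P * Q * (Q * P) = P * Q * Q * P by simp only [Matrix.mul_assoc], trace_mul_comm _ P]
    simp only [Matrix.mul_assoc]
  have hXY : (P * Q * (Q * V * P)).trace = (P * P * (Q * Q) * V).trace := by
    rw [show P * Q * (Q * V * P) = P * Q * Q * V * P by simp only [Matrix.mul_assoc],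
      trace_mul_comm _ P]
    simp only [Matrix.mul_assoc]
  have hY : ((Q * V * P)ᴴ * (Q * V * P)).trace = (P * P * (Vᴴ * (Q * Q) * V)).trace := by
    rw [conjTranspose_mul, conjTranspose_mul, hP.eq, hQ.eq,
      show P * (Vᴴ * Q) * (Q * V * P) = P * Vᴴ * Q * Q * V * P by simp only [Matrix.mul_assoc],
      trace_mul_comm _ P]
    simp only [Matrix.mul_assoc]
  have hX0 : 0 ≤ RCLike.re (P * P * (Q * Q)).trace :=
    hX ▸ (posSemidef_self_mul_conjTranspose (P * Q)).re_trace_nonneg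
  have hY0 : 0 ≤ RCLike.re ((Q * V * P)ᴴ * (Q * V * P)).trace :=
    (posSemidef_conjTranspose_mul_self _).re_trace_nonneg
  have hY1 : RCLike.re ((Q * V * P)ᴴ * (Q * V * P)).trace ≤
      √(RCLike.re (P * P * (P * P)).trace) * √(RCLike.re (Q * Q * (Q * Q)).trace) := by
    rw [hY]
    refine (RCLike.re_le_norm _).trans (norm_trace_mul_unitary_conj_le ?_ ?_ hV)
    · simpa only [sq] using hP.pow 2
    · simpa only [sq] using hQ.pow 2
  calc ‖(P * P * (Q * Q) * V).trace‖ ^ 2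
      ≤ (√(RCLike.re (P * P * (Q * Q)).trace) *
          √(RCLike.re ((Q * V * P)ᴴ * (Q * V * P)).trace)) ^ 2 := by
        rw [← hXY, ← hX]
        exact pow_le_pow_left₀ (norm_nonneg _) (norm_trace_mul_le _ _) 2
    _ = RCLike.re (P * P * (Q * Q)).trace * RCLike.re ((Q * V * P)ᴴ * (Q * V * P)).trace := by
        rw [mul_pow, Real.sq_sqrt hX0, Real.sq_sqrt hY0]
    _ ≤ _ := mul_le_mul_of_nonneg_left hY1 hX0

end HilbertSchmidt

section Fidelity

variable {n : ℕ} {A B : Mat n}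

theorem exists_mem_unitaryGroup_mul_eq_msqrt {M : Mat n} (hM : IsUnit M) :
    ∃ V ∈ unitaryGroup (Fin n) ℂ, M * V = msqrt (M * Mᴴ) := by
  have hMM : (M * Mᴴ).PosDef := PosDef.mul_conjTranspose_self M (vecMul_injective_iff_isUnit.mpr hM)
  set H := msqrt (M * Mᴴ)
  have hH : H.PosDef := posDef_msqrt hMM
  have hHH : H * H = M * Mᴴ := msqrt_mul_msqrt hMM.posSemidef
  have hdet : IsUnit H.det := (isUnit_iff_isUnit_det H).mp hH.isUnit
  refine ⟨Mᴴ * H⁻¹, ?_, ?_⟩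
  · rw [mem_unitaryGroup_iff', star_eq_conjTranspose, conjTranspose_mul,
      conjTranspose_conjTranspose, conjTranspose_nonsing_inv, hH.1.eq]
    calc H⁻¹ * M * (Mᴴ * H⁻¹) = H⁻¹ * (H * H) * H⁻¹ := by simp only [hHH, Matrix.mul_assoc]
      _ = 1 := by rw [nonsing_inv_mul_cancel_left H H hdet, mul_nonsing_inv H hdet]
  · rw [← Matrix.mul_assoc, ← hHH, mul_nonsing_inv_cancel_right H H hdet]

theorem norm_trace_le_re_trace_msqrt {M : Mat n} (hM : IsUnit M) :
    ‖M.trace‖ ≤ (msqrt (M * Mᴴ)).trace.re := by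
  obtain ⟨V, hV, hMV⟩ := exists_mem_unitaryGroup_mul_eq_msqrt hM
  set H := msqrt (M * Mᴴ)
  have hH : H.PosSemidef := posSemidef_msqrt (posSemidef_self_mul_conjTranspose M)
  set R := msqrt H
  have hR : Rᴴ = R := (posSemidef_msqrt hH).1.eq
  have hRR : R * R = H := msqrt_mul_msqrt hH
  have hM_eq : M = R * (R * Vᴴ) := by
    rw [← Matrix.mul_assoc, hRR, ← hMV, Matrix.mul_assoc, ← star_eq_conjTranspose,
      mem_unitaryGroup_iff.mp hV, Matrix.mul_one]
  have hRV : ((R * Vᴴ)ᴴ * (R * Vᴴ)).trace = H.trace := by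
    rw [conjTranspose_mul, conjTranspose_conjTranspose, hR,
      show V * R * (R * Vᴴ) = V * H * Vᴴ by rw [← hRR]; simp only [Matrix.mul_assoc],
      trace_mul_cycle, ← star_eq_conjTranspose, mem_unitaryGroup_iff'.mp hV, Matrix.one_mul]
  calc ‖M.trace‖ ≤ √(R * Rᴴ).trace.re * √((R * Vᴴ)ᴴ * (R * Vᴴ)).trace.re := by
        rw [hM_eq]; exact norm_trace_mul_le _ _
    _ = √H.trace.re * √H.trace.re := by rw [hRV, hR, hRR]
    _ = H.trace.re := Real.mul_self_sqrt hH.re_trace_nonneg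

theorem msqrt_mul_mul_msqrt_eq (hA : A.PosSemidef) (hB : B.PosSemidef) :
    msqrt A * B * msqrt A = (msqrt A * msqrt B) * (msqrt A * msqrt B)ᴴ := by
  rw [conjTranspose_mul, (posSemidef_msqrt hA).1.eq, (posSemidef_msqrt hB).1.eq]
  nth_rewrite 1 [← msqrt_mul_msqrt hB]
  simp only [Matrix.mul_assoc]

theorem norm_trace_msqrt_mul_msqrt_le (hA : A.PosDef) (hB : B.PosDef) :
    ‖(msqrt A * msqrt B).trace‖ ≤ (msqrt (msqrt A * B * msqrt A)).trace.re := by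
  rw [msqrt_mul_mul_msqrt_eq hA.posSemidef hB.posSemidef]
  exact norm_trace_le_re_trace_msqrt ((posDef_msqrt hA).isUnit.mul (posDef_msqrt hB).isUnit)

theorem re_trace_msqrt_sq_le (hA : A.PosDef) (hB : B.PosDef) :
    (msqrt (msqrt A * B * msqrt A)).trace.re ^ 2 ≤
      (msqrt A * msqrt B).trace.re * (√A.trace.re * √B.trace.re) := by
  have hsA := posSemidef_msqrt hA.posSemidef
  have hsB := posSemidef_msqrt hB.posSemidef
  obtain ⟨V, hV, hMV⟩ :=
    exists_mem_unitaryGroup_mul_eq_msqrt ((posDef_msqrt hA).isUnit.mul (posDef_msqrt hB).isUnit)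
  rw [msqrt_mul_mul_msqrt_eq hA.posSemidef hB.posSemidef, ← hMV]
  have := norm_trace_mul_unitary_sq_le (posSemidef_msqrt hsA).1 (posSemidef_msqrt hsB).1 hV
  rw [msqrt_mul_msqrt hsA, msqrt_mul_msqrt hsB, msqrt_mul_msqrt hA.posSemidef,
    msqrt_mul_msqrt hB.posSemidef] at this
  refine le_trans ?_ this
  rw [← sq_abs]
  exact pow_le_pow_left₀ (abs_nonneg _) (Complex.abs_re_le_norm _) 2

theorem re_trace_mul_pos_of_posDef [NeZero n] {C D : Mat n} (hC : C.PosDef) (hD : D.PosDef) :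
    0 < (C * D).trace.re := by
  have hP := posDef_msqrt hC
  have hPDP : (msqrt C * D * msqrt C).PosDef := by
    simpa only [hP.1.eq] using
      hD.conjTranspose_mul_mul_same (mulVec_injective_iff_isUnit.mpr hP.isUnit)
  rw [← msqrt_mul_msqrt hC.posSemidef, Matrix.mul_assoc, trace_mul_comm]
  exact (Complex.pos_iff.mp hPDP.trace_pos).1

theorem hFid_self (hA : A.PosSemidef) (h : A.trace = 1) : hFid A A = 1 := by
  rw [hFid, msqrt_mul_msqrt hA, h]
  norm_num

theorem uFid_self (hA : A.PosSemidef) (h : A.trace = 1) : uFid A A = 1 := by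
  have hAA : msqrt A * A * msqrt A = A * A := by
    calc msqrt A * A * msqrt A = msqrt A * (msqrt A * msqrt A) * msqrt A := by
          rw [msqrt_mul_msqrt hA]
      _ = (msqrt A * msqrt A) * (msqrt A * msqrt A) := by simp only [Matrix.mul_assoc]
      _ = A * A := by rw [msqrt_mul_msqrt hA]
  rw [uFid, hAA, msqrt_eq_of_mul_self_eq hA rfl, h]
  norm_num

theorem hFid_pos [NeZero n] (hA : A.PosDef) (hB : B.PosDef) : 0 < hFid A B :=
  pow_pos (re_trace_mul_pos_of_posDef (posDef_msqrt hA) (posDef_msqrt hB)) 2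

theorem hFid_le_uFid (hA : A.PosDef) (hB : B.PosDef) : hFid A B ≤ uFid A B := by
  rw [hFid, uFid, ← sq_abs]
  exact pow_le_pow_left₀ (abs_nonneg _)
    ((Complex.abs_re_le_norm _).trans (norm_trace_msqrt_mul_msqrt_le hA hB)) 2

theorem uFid_sq_le_hFid (hA : A.PosDef) (hB : B.PosDef) (hTA : A.trace = 1) (hTB : B.trace = 1) :
    uFid A B ^ 2 ≤ hFid A B := by
  have := re_trace_msqrt_sq_le hA hB
  rw [hTA, hTB, Complex.one_re, Real.sqrt_one, mul_one, mul_one] at this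
  exact pow_le_pow_left₀ (sq_nonneg _) this 2

theorem log_hFid_le_log_uFid [NeZero n] (hA : A.PosDef) (hB : B.PosDef) :
    Real.log (hFid A B) ≤ Real.log (uFid A B) :=
  Real.log_le_log (hFid_pos hA hB) (hFid_le_uFid hA hB)

theorem two_mul_log_uFid_le_log_hFid [NeZero n] (hA : A.PosDef) (hB : B.PosDef)
    (hTA : A.trace = 1) (hTB : B.trace = 1) :
    2 * Real.log (uFid A B) ≤ Real.log (hFid A B) := by
  rw [show 2 * Real.log (uFid A B) = Real.log (uFid A B ^ 2) by rw [Real.log_pow]; norm_num]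
  exact Real.log_le_log (pow_pos ((hFid_pos hA hB).trans_le (hFid_le_uFid hA hB)) 2)
    (uFid_sq_le_hFid hA hB hTA hTB)

end Fidelity

section SecondDerivative

open Filter Topology

theorem IsLocalMin.deriv_deriv_nonneg {h : ℝ → ℝ} {x : ℝ} (hmin : IsLocalMin h x)
    (hc : ContinuousAt h x) : 0 ≤ deriv (deriv h) x := by
  by_contra! hneg
  have hmax := isLocalMax_of_deriv_deriv_neg hneg hmin.deriv_eq_zero hc
  have hconst : h =ᶠ[𝓝 x] fun _ => h x := by
    filter_upwards [hmin, hmax] with y hy₁ hy₂ using le_antisymm hy₂ hy₁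
  exact hneg.ne (by rw [hconst.deriv.deriv_eq]; simp)

theorem deriv_deriv_le_of_eventuallyLE {f g : ℝ → ℝ} {x : ℝ} (hf : ContDiffAt ℝ 2 f x)
    (hg : ContDiffAt ℝ 2 g x) (hfg : f ≤ᶠ[𝓝 x] g) (hx : f x = g x) :
    deriv (deriv f) x ≤ deriv (deriv g) x := by
  have hmin : IsLocalMin (g - f) x := by
    filter_upwards [hfg] with y hy
    simp only [Pi.sub_apply, hx, sub_self, sub_nonneg, hy]
  have := hmin.deriv_deriv_nonneg (hg.continuousAt.sub hf.continuousAt)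
  have h2 : deriv (deriv (g - f)) x = deriv (deriv g) x - deriv (deriv f) x := by
    simpa only [iteratedDeriv_eq_iterate, Function.iterate_succ, Function.iterate_zero,
      Function.comp_apply, Function.id_comp] using iteratedDeriv_sub hg hf
  linarith

end SecondDerivative

theorem stmt7_general {n L : ℕ} (hn : 1 ≤ n)
    (σ : (Fin L → ℝ) → Mat n)
    (hσs : ∀ γ, (σ γ).PosDef ∧ (σ γ).trace = 1)
    (γ : Fin L → ℝ) (u : Fin L → ℝ)
    (hFB : ContDiffAt ℝ 2 (fun ε : Fin L → ℝ => -2 * Real.log (uFid (σ γ) (σ (γ + ε)))) 0)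
    (hWY : ContDiffAt ℝ 2 (fun ε : Fin L → ℝ => -2 * Real.log (hFid (σ γ) (σ (γ + ε)))) 0) :
    deriv (deriv (fun s : ℝ => -2 * Real.log (uFid (σ γ) (σ (γ + s • u))))) 0
      ≤ deriv (deriv (fun s : ℝ => -2 * Real.log (hFid (σ γ) (σ (γ + s • u))))) 0
    ∧ (1 / 2 : ℝ) * deriv (deriv (fun s : ℝ => -2 * Real.log (hFid (σ γ) (σ (γ + s • u))))) 0
      ≤ deriv (deriv (fun s : ℝ => -2 * Real.log (uFid (σ γ) (σ (γ + s • u))))) 0 := by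
  have : NeZero n := ⟨by omega⟩
  have hline {F : (Fin L → ℝ) → ℝ} (hF : ContDiffAt ℝ 2 F 0) :
      ContDiffAt ℝ 2 (fun s : ℝ => F (s • u)) 0 :=
    ContDiffAt.comp (g := F) (0 : ℝ) (by rwa [zero_smul]) (contDiffAt_id.smul contDiffAt_const)
  set f := fun s : ℝ => -2 * Real.log (uFid (σ γ) (σ (γ + s • u)))
  set g := fun s : ℝ => -2 * Real.log (hFid (σ γ) (σ (γ + s • u)))
  obtain ⟨hA, hTA⟩ := hσs γ
  have hf0 : f 0 = 0 := by simp [f, uFid_self hA.posSemidef hTA]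
  have hg0 : g 0 = 0 := by simp [g, hFid_self hA.posSemidef hTA]
  have hfg (s : ℝ) : f s ≤ g s := by
    linarith [log_hFid_le_log_uFid hA (hσs (γ + s • u)).1]
  have hgf (s : ℝ) : g s ≤ 2 * f s := by
    linarith [two_mul_log_uFid_le_log_hFid hA (hσs (γ + s • u)).1 hTA (hσs (γ + s • u)).2]
  have h₁ := deriv_deriv_le_of_eventuallyLE (f := f) (g := g) (hline hFB) (hline hWY)
    (.of_forall hfg) (by rw [hf0, hg0])
  have h₂ := deriv_deriv_le_of_eventuallyLE (f := g) (g := fun s => 2 * f s) (hline hWY)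
    (contDiffAt_const.mul (hline hFB)) (.of_forall hgf) (by rw [hf0, hg0, mul_zero])
  simp only [deriv_const_mul_field'] at h₂
  constructor <;> linarith

/-- The Fisher–Bures and Wigner–Yanase information matrices differ by at most a factor of two
in the Loewner order: along every direction `u`, writing
`f_FB(s) = −2 ln F(σ(γ), σ(γ+s·u))` and `f_WY(s) = −2 ln F_H(σ(γ), σ(γ+s·u))`, one has
`f_WY''(0) ≥ f_FB''(0) ≥ (1/2) f_WY''(0)`; i.e. `I^WY(γ) ⪰ I^FB(γ) ⪰ (1/2) I^WY(γ)`. -/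
theorem stmt7 {n L : ℕ} (hn : 1 ≤ n) (hL : 1 ≤ L)
    (σ : (Fin L → ℝ) → Mat n)
    (hσC : ContDiff ℝ 2 σ)
    (hσs : ∀ γ, (σ γ).PosDef ∧ (σ γ).trace = 1)
    (γ : Fin L → ℝ) (u : Fin L → ℝ)
    (hFB : ContDiffAt ℝ 2 (fun ε : Fin L → ℝ => -2 * Real.log (uFid (σ γ) (σ (γ + ε)))) 0)
    (hWY : ContDiffAt ℝ 2 (fun ε : Fin L → ℝ => -2 * Real.log (hFid (σ γ) (σ (γ + ε)))) 0) :
    deriv (deriv (fun s : ℝ => -2 * Real.log (uFid (σ γ) (σ (γ + s • u))))) 0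
      ≤ deriv (deriv (fun s : ℝ => -2 * Real.log (hFid (σ γ) (σ (γ + s • u))))) 0
    ∧ (1 / 2 : ℝ) * deriv (deriv (fun s : ℝ => -2 * Real.log (hFid (σ γ) (σ (γ + s • u))))) 0
      ≤ deriv (deriv (fun s : ℝ => -2 * Real.log (uFid (σ γ) (σ (γ + s • u))))) 0 :=
  stmt7_general hn σ hσs γ u hFB hWY

end
end

section
/- For all i, j ∈ {1,…,K}: 4·Re[⟨Qφ_i, Qφ_j⟩ − ⟨Qφ_i, ψ(θ,φ)⟩⟨ψ(θ,φ), Qφ_j⟩] = −8·Tr[Ψ_φ†(H_j) √ρ(θ) Ψ_φ†(H_i) √ρ(θ)] + 4·Tr[{Ψ_φ†(H_i), Ψ_φ†(H_j)} ρ(θ)] (an equality of complex numbers whose left-hand side is real); that is, the Wigner–Yanase information matrix elements of the evolved quantum Boltzmann machine with respect to the φ parameters are I^WY_{ij}(φ) = −8 Tr[Ψ_φ†(H_j)√ρ(θ)Ψ_φ†(H_i)√ρ(θ)] + 4⟨{Ψ_φ†(H_i),Ψ_φ†(H_j)}⟩_{ρ(θ)}. -/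
open MeasureTheory Matrix
open scoped Kronecker

noncomputable section

attribute [local instance] Matrix.normedAddCommGroup Matrix.normedSpace

/-- The high-peak-tent probability density `p(t) = (2/π) ln |coth (π t / 2)|`. -/
def hpt (t : ℝ) : ℝ :=
  (2 / Real.pi) * Real.log |Real.cosh (Real.pi * t / 2) / Real.sinh (Real.pi * t / 2)|

/-- The channel `Φ_{θ/2}(X) = ∫ℝ p(t) exp(−iG(θ)t/2) X exp(iG(θ)t/2) dt`. -/
def chanΦhalf {n J : ℕ} (G : Fin J → Mat n) (θ : Fin J → ℝ) (X : Mat n) : Mat n :=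
  ∫ t : ℝ, hpt t •
    (NormedSpace.exp ((-(Complex.I * (t : ℂ)) / 2) • Gm G θ) * X *
      NormedSpace.exp ((Complex.I * (t : ℂ) / 2) • Gm G θ))

/-- The channel `Ψ_φ(X) = ∫₀¹ exp(−iH(φ)t) X exp(iH(φ)t) dt`. -/
def chanΨ {n K : ℕ} (H : Fin K → Mat n) (φ : Fin K → ℝ) (X : Mat n) : Mat n :=
  ∫ t in (0:ℝ)..1,
    (NormedSpace.exp ((-(Complex.I * (t : ℂ))) • Hm H φ) * X *
      NormedSpace.exp ((Complex.I * (t : ℂ)) • Hm H φ))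

/-- The adjoint channel `Ψ_φ†(X) = ∫₀¹ exp(iH(φ)t) X exp(−iH(φ)t) dt`. -/
def chanΨdag {n K : ℕ} (H : Fin K → Mat n) (φ : Fin K → ℝ) (X : Mat n) : Mat n :=
  ∫ t in (0:ℝ)..1,
    (NormedSpace.exp ((Complex.I * (t : ℂ)) • Hm H φ) * X *
      NormedSpace.exp ((-(Complex.I * (t : ℂ))) • Hm H φ))

/-- `√ρ(θ) = exp(−G(θ)/2)/√Z(θ)`. -/
def sqrtρ {n J : ℕ} (G : Fin J → Mat n) (θ : Fin J → ℝ) : Mat n :=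
  ((Real.sqrt (Zpf G θ) : ℂ))⁻¹ • NormedSpace.exp (-((1 / 2 : ℂ) • Gm G θ))

/-- `√ω(θ,φ) = exp(−iH(φ)) √ρ(θ) exp(iH(φ))`. -/
def sqrtω {n J K : ℕ} (G : Fin J → Mat n) (H : Fin K → Mat n)
    (θ : Fin J → ℝ) (φ : Fin K → ℝ) : Mat n :=
  uH H φ * sqrtρ G θ * uH' H φ

/-- The maximally entangled vector `Γ ∈ ℂ^{n²}`, `Γ_{(a,b)} = δ_{a,b}`. -/
def Γv (n : ℕ) : Fin n × Fin n → ℂ := fun ab => if ab.1 = ab.2 then 1 else 0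

/-- The canonically purified evolved quantum Boltzmann machine `ψ(θ,φ) = (√ω(θ,φ) ⊗ I)Γ`. -/
def ψv {n J K : ℕ} (G : Fin J → Mat n) (H : Fin K → Mat n)
    (θ : Fin J → ℝ) (φ : Fin K → ℝ) : Fin n × Fin n → ℂ :=
  (sqrtω G H θ φ ⊗ₖ (1 : Mat n)).mulVec (Γv n)

/-- The partial derivative of `ψ(θ,φ)` with respect to `θ_j`:
`Qθ_j = (1/2)⟨G_j⟩_{ρ(θ)} ψ(θ,φ) − (1/4)((exp(−iH(φ)) {Φ_{θ/2}(G_j), √ρ(θ)} exp(iH(φ))) ⊗ I)Γ`. -/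
def Qθ {n J K : ℕ} (G : Fin J → Mat n) (H : Fin K → Mat n)
    (θ : Fin J → ℝ) (φ : Fin K → ℝ) (j : Fin J) : Fin n × Fin n → ℂ :=
  ((1 / 2 : ℂ) * Matrix.trace (G j * qbm G θ)) • ψv G H θ φ
    - (1 / 4 : ℂ) •
        ((uH H φ * (chanΦhalf G θ (G j) * sqrtρ G θ + sqrtρ G θ * chanΦhalf G θ (G j)) *
            uH' H φ) ⊗ₖ (1 : Mat n)).mulVec (Γv n)

/-- The partial derivative of `ψ(θ,φ)` with respect to `φ_k`:
`Qφ_k = i(([√ω(θ,φ), Ψ_φ(H_k)]) ⊗ I)Γ`. -/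
def Qφ {n J K : ℕ} (G : Fin J → Mat n) (H : Fin K → Mat n)
    (θ : Fin J → ℝ) (φ : Fin K → ℝ) (k : Fin K) : Fin n × Fin n → ℂ :=
  Complex.I •
    ((sqrtω G H θ φ * chanΨ H φ (H k) - chanΨ H φ (H k) * sqrtω G H θ φ) ⊗ₖ (1 : Mat n)).mulVec
      (Γv n)

/-- `⟨x, y⟩ = ∑ m, conj (x m) * y m` on `ℂ^{n²}`. -/
def dotc2 {n : ℕ} (x y : Fin n × Fin n → ℂ) : ℂ := ∑ m, (starRingEnd ℂ) (x m) * y m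

/-! Put `U = exp(−iH(φ))`. Then `√ω = U √ρ U†` and, by the substitution `t ↦ 1 − t`,
`Ψ_φ(X) = U Ψ_φ†(X) U†`, so `Qφ_k` is the vectorization of `U (i[√ρ, A_k]) U†` with
`A_k = Ψ_φ†(H_k)` Hermitian. Vectorization turns `⟨vec X, vec Y⟩` into `Tr(X†Y)`, which is
invariant under unitary conjugation, so `U` drops out. Finally `i[√ρ, A_k]` is Hermitian and
trace-orthogonal to `√ρ`, and expanding `−Tr([√ρ, A_i][√ρ, A_j])` cyclically gives
`−2 Tr(A_j √ρ A_i √ρ) + Tr({A_i, A_j} ρ)`. -/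

theorem Complex.isSelfAdjoint_ofReal (r : ℝ) : IsSelfAdjoint (r : ℂ) :=
  Complex.conj_ofReal r

theorem Complex.star_I_mul_ofReal (t : ℝ) : star (Complex.I * t) = -(Complex.I * t) := by
  simp

theorem ContinuousLinearEquiv.intervalIntegral_comp_comm {𝕜 E F : Type*} [RCLike 𝕜]
    [NormedAddCommGroup E] [NormedSpace ℝ E] [NormedSpace 𝕜 E] [NormedAddCommGroup F]
    [NormedSpace ℝ F] [NormedSpace 𝕜 F] (L : E ≃L[𝕜] F) (f : ℝ → E) (a b : ℝ) :
    ∫ t in a..b, L (f t) = L (∫ t in a..b, f t) := by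
  simp_rw [intervalIntegral, L.integral_comp_comm, map_sub]

section MatrixExp
variable {m : Type*} [Fintype m] [DecidableEq m]

theorem Matrix.exp_smul_mul_exp_smul (M : Matrix m m ℂ) (a b : ℂ) :
    NormedSpace.exp (a • M) * NormedSpace.exp (b • M) = NormedSpace.exp ((a + b) • M) := by
  rw [add_smul, Matrix.exp_add_of_commute]
  exact ((Commute.refl M).smul_left a).smul_right b

theorem IsSelfAdjoint.star_exp_smul {M : Matrix m m ℂ} (hM : IsSelfAdjoint M) (c : ℂ) :
    star (NormedSpace.exp (c • M)) = NormedSpace.exp (star c • M) := by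
  rw [NormedSpace.star_exp, star_smul, hM.star_eq]

theorem IsSelfAdjoint.exp_smul_mem_unitary {M : Matrix m m ℂ} (hM : IsSelfAdjoint M) {c : ℂ}
    (hc : star c = -c) : NormedSpace.exp (c • M) ∈ unitary (Matrix m m ℂ) := by
  rw [Unitary.mem_iff, hM.star_exp_smul, hc, Matrix.exp_smul_mul_exp_smul,
    Matrix.exp_smul_mul_exp_smul, neg_add_cancel, add_neg_cancel, zero_smul, and_self,
    NormedSpace.exp_zero]

end MatrixExp

section Algebra
variable {m : Type*} [Fintype m]

theorem Matrix.trace_commutator_mul_commutator {R : Type*} [CommRing R] (s A B : Matrix m m R) :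
    trace ((s * A - A * s) * (s * B - B * s))
      = 2 * trace (B * s * A * s) - trace ((A * B + B * A) * (s * s)) := by
  have h1 : trace (s * A * (s * B)) = trace (B * s * A * s) := by
    rw [← mul_assoc, trace_mul_comm]; simp only [mul_assoc]
  have h2 : trace (A * s * (B * s)) = trace (B * s * A * s) := by
    rw [trace_mul_comm]; simp only [mul_assoc]
  have h3 : trace (s * A * (B * s)) = trace (A * B * (s * s)) := by
    rw [show s * A * (B * s) = s * (A * B * s) by simp only [mul_assoc], trace_mul_comm]
    simp only [mul_assoc]
  have h4 : trace (A * s * (s * B)) = trace (B * A * (s * s)) := by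
    rw [show A * s * (s * B) = A * (s * s) * B by simp only [mul_assoc], trace_mul_comm]
    simp only [mul_assoc]
  simp only [sub_mul, mul_sub, add_mul, trace_sub, trace_add, h1, h2, h3, h4]
  ring

theorem Matrix.trace_commutator_mul_self {R : Type*} [CommRing R] (s A : Matrix m m R) :
    trace ((s * A - A * s) * s) = 0 := by
  rw [sub_mul, trace_sub, trace_mul_cycle, mul_assoc A, trace_mul_comm A, sub_self]

theorem Matrix.IsHermitian.I_smul_commutator {s A : Matrix m m ℂ} (hs : s.IsHermitian)
    (hA : A.IsHermitian) : (Complex.I • (s * A - A * s)).IsHermitian := by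
  rw [IsHermitian, conjTranspose_smul, conjTranspose_sub, conjTranspose_mul, conjTranspose_mul,
    hs.eq, hA.eq, Complex.star_def, Complex.conj_I, neg_smul, ← smul_neg, neg_sub]

theorem Matrix.IsHermitian.ofReal_re_trace_mul {X Y : Matrix m m ℂ} (hX : X.IsHermitian)
    (hY : Y.IsHermitian) : ((trace (X * Y)).re : ℂ) = trace (X * Y) := by
  refine Complex.conj_eq_iff_re.mp ?_
  rw [← Complex.star_def, ← trace_conjTranspose, conjTranspose_mul, hX.eq, hY.eq, trace_mul_comm]

theorem Matrix.IsHermitian.wignerYanase_commutator {s A B : Matrix m m ℂ} (hs : s.IsHermitian)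
    (hA : A.IsHermitian) (hB : B.IsHermitian) :
    ((4 * (trace ((Complex.I • (s * A - A * s))ᴴ * (Complex.I • (s * B - B * s)))
        - trace ((Complex.I • (s * A - A * s))ᴴ * s)
          * trace (sᴴ * (Complex.I • (s * B - B * s)))).re : ℝ) : ℂ)
      = -8 * trace (B * s * A * s) + 4 * trace ((A * B + B * A) * (s * s)) := by
  have hCA := hs.I_smul_commutator hA
  have h0 : trace (Complex.I • (s * A - A * s) * s) = 0 := by
    rw [smul_mul, trace_smul, trace_commutator_mul_self, smul_zero]
  rw [hCA.eq, h0, zero_mul, sub_zero, Complex.ofReal_mul,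
    hCA.ofReal_re_trace_mul (hs.I_smul_commutator hB), smul_mul_smul_comm, trace_smul,
    trace_commutator_mul_commutator]
  simp only [smul_eq_mul, Complex.I_mul_I]
  push_cast
  ring

theorem Matrix.trace_conjStarAlgAut {R : Type*} [DecidableEq m] [CommRing R] [StarRing R]
    (u : unitary (Matrix m m R)) (X : Matrix m m R) :
    trace (Unitary.conjStarAlgAut R (Matrix m m R) u X) = trace X := by
  rw [Unitary.conjStarAlgAut_apply, trace_mul_cycle, Unitary.coe_star_mul_self, one_mul]

end Algebra

section Vectorization
variable {n : ℕ}

theorem kronecker_one_mulVec_Γv (X : Mat n) :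
    (X ⊗ₖ (1 : Mat n)).mulVec (Γv n) = fun ab => X ab.1 ab.2 := by
  funext ab
  simp [mulVec, dotProduct, Γv, Fintype.sum_prod_type, one_apply]

theorem dotc2_kronecker_one_mulVec_Γv (X Y : Mat n) :
    dotc2 ((X ⊗ₖ (1 : Mat n)).mulVec (Γv n)) ((Y ⊗ₖ (1 : Mat n)).mulVec (Γv n))
      = trace (Xᴴ * Y) := by
  simp only [kronecker_one_mulVec_Γv, dotc2, trace, diag, mul_apply, conjTranspose_apply,
    Fintype.sum_prod_type, Complex.star_def]
  exact Finset.sum_comm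

theorem dotc2_conjStarAlgAut (u : unitary (Mat n)) (X Y : Mat n) :
    dotc2 ((Unitary.conjStarAlgAut ℂ (Mat n) u X ⊗ₖ (1 : Mat n)).mulVec (Γv n))
        ((Unitary.conjStarAlgAut ℂ (Mat n) u Y ⊗ₖ (1 : Mat n)).mulVec (Γv n))
      = trace (Xᴴ * Y) := by
  rw [dotc2_kronecker_one_mulVec_Γv, ← star_eq_conjTranspose, ← map_star, ← map_mul,
    trace_conjStarAlgAut, star_eq_conjTranspose]

end Vectorization

section Model
variable {n J K : ℕ}

theorem isSelfAdjoint_Hm {H : Fin K → Mat n} (hH : ∀ k, (H k).IsHermitian) (φ : Fin K → ℝ) :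
    IsSelfAdjoint (Hm H φ) :=
  isSelfAdjoint_sum _ fun k _ => (Complex.isSelfAdjoint_ofReal (φ k)).smul (hH k).isSelfAdjoint

theorem isSelfAdjoint_Gm {G : Fin J → Mat n} (hG : ∀ j, (G j).IsHermitian) (θ : Fin J → ℝ) :
    IsSelfAdjoint (Gm G θ) :=
  isSelfAdjoint_sum _ fun j _ => (Complex.isSelfAdjoint_ofReal (θ j)).smul (hG j).isSelfAdjoint

theorem uH_eq (H : Fin K → Mat n) (φ : Fin K → ℝ) :
    uH H φ = NormedSpace.exp ((-Complex.I) • Hm H φ) := by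
  rw [uH, neg_smul]

theorem star_uH {H : Fin K → Mat n} (hH : ∀ k, (H k).IsHermitian) (φ : Fin K → ℝ) :
    star (uH H φ) = uH' H φ := by
  rw [uH_eq, (isSelfAdjoint_Hm hH φ).star_exp_smul, star_neg, Complex.star_def, Complex.conj_I,
    neg_neg, uH']

theorem uH_mem_unitary {H : Fin K → Mat n} (hH : ∀ k, (H k).IsHermitian) (φ : Fin K → ℝ) :
    uH H φ ∈ unitary (Mat n) := by
  rw [uH_eq]
  exact (isSelfAdjoint_Hm hH φ).exp_smul_mem_unitary (by simp)

theorem isSelfAdjoint_chanΨdag {H : Fin K → Mat n} (hH : ∀ k, (H k).IsHermitian)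
    (φ : Fin K → ℝ) {X : Mat n} (hX : IsSelfAdjoint X) : IsSelfAdjoint (chanΨdag H φ X) := by
  have hHm := isSelfAdjoint_Hm hH φ
  rw [IsSelfAdjoint, chanΨdag, ← starL'_apply ℝ]
  refine ((starL' ℝ).intervalIntegral_comp_comm _ 0 1).symm.trans
    (intervalIntegral.integral_congr fun t _ => ?_)
  show star _ = _
  rw [star_mul, star_mul, hX.star_eq, hHm.star_exp_smul, hHm.star_exp_smul, star_neg,
    Complex.star_I_mul_ofReal, neg_neg, mul_assoc]

theorem chanΨ_eq_conj_chanΨdag {H : Fin K → Mat n} (hH : ∀ k, (H k).IsHermitian)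
    (φ : Fin K → ℝ) (X : Mat n) :
    chanΨ H φ X = uH H φ * chanΨdag H φ X * uH' H φ := by
  let L : Mat n ≃L[ℂ] Mat n := (Unitary.conjStarAlgAut ℂ (Mat n)
    ⟨uH H φ, uH_mem_unitary hH φ⟩).toAlgEquiv.toLinearEquiv.toContinuousLinearEquiv
  have hL (Y : Mat n) : L Y = uH H φ * Y * uH' H φ := by
    simp [L, ← star_uH hH]
  have hreflect := intervalIntegral.integral_comp_sub_left (a := 0) (b := 1)
    (fun t : ℝ => NormedSpace.exp ((-(Complex.I * (t : ℂ))) • Hm H φ) * X *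
      NormedSpace.exp ((Complex.I * (t : ℂ)) • Hm H φ)) 1
  rw [sub_zero, sub_self] at hreflect
  rw [← hL, chanΨdag, chanΨ, ← hreflect]
  refine Eq.trans (intervalIntegral.integral_congr fun t _ => ?_)
    (L.intervalIntegral_comp_comm _ 0 1)
  refine Eq.trans ?_ (hL _).symm
  rw [uH_eq, uH']
  conv_rhs => rw [← mul_assoc, ← mul_assoc, Matrix.exp_smul_mul_exp_smul, mul_assoc,
    Matrix.exp_smul_mul_exp_smul]
  push_cast
  ring_nf

open scoped ComplexOrder in
theorem Zpf_nonneg {G : Fin J → Mat n} (hG : ∀ j, (G j).IsHermitian) (θ : Fin J → ℝ) :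
    0 ≤ Zpf G θ := by
  set E := NormedSpace.exp ((-(1 / 2) : ℂ) • Gm G θ)
  have hE : NormedSpace.exp (-(Gm G θ)) = Eᴴ * E := by
    rw [← star_eq_conjTranspose, (isSelfAdjoint_Gm hG θ).star_exp_smul,
      Matrix.exp_smul_mul_exp_smul]
    norm_num
  rw [Zpf, hE]
  exact (Complex.nonneg_iff.mp (posSemidef_conjTranspose_mul_self E).trace_nonneg).1

theorem isSelfAdjoint_sqrtρ {G : Fin J → Mat n} (hG : ∀ j, (G j).IsHermitian) (θ : Fin J → ℝ) :
    IsSelfAdjoint (sqrtρ G θ) := by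
  have hhalf : IsSelfAdjoint (1 / 2 : ℂ) := by simp [IsSelfAdjoint]
  exact (Complex.isSelfAdjoint_ofReal _).inv₀.smul (hhalf.smul (isSelfAdjoint_Gm hG θ)).neg.exp

theorem sqrtρ_mul_self {G : Fin J → Mat n} (hG : ∀ j, (G j).IsHermitian) (θ : Fin J → ℝ) :
    sqrtρ G θ * sqrtρ G θ = qbm G θ := by
  rw [sqrtρ, qbm, smul_mul_smul_comm, ← neg_smul, Matrix.exp_smul_mul_exp_smul, ← mul_inv,
    ← Complex.ofReal_mul, Real.mul_self_sqrt (Zpf_nonneg hG θ)]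
  norm_num

end Model

theorem stmt14_general {n J K : ℕ} (G : Fin J → Mat n) (H : Fin K → Mat n)
    (hG : ∀ j, (G j).IsHermitian) (hH : ∀ k, (H k).IsHermitian)
    (θ : Fin J → ℝ) (φ : Fin K → ℝ)
    (i j : Fin K) :
    ((4 * (dotc2 (Qφ G H θ φ i) (Qφ G H θ φ j)
        - dotc2 (Qφ G H θ φ i) (ψv G H θ φ) * dotc2 (ψv G H θ φ) (Qφ G H θ φ j)).re : ℝ) : ℂ)
      = -8 * Matrix.trace (chanΨdag H φ (H j) * sqrtρ G θ * chanΨdag H φ (H i) * sqrtρ G θ)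
        + 4 * Matrix.trace ((chanΨdag H φ (H i) * chanΨdag H φ (H j)
            + chanΨdag H φ (H j) * chanΨdag H φ (H i)) * qbm G θ) := by
  let u : unitary (Mat n) := ⟨uH H φ, uH_mem_unitary hH φ⟩
  let conj := Unitary.conjStarAlgAut ℂ (Mat n) u
  set s := sqrtρ G θ
  set A := fun k => chanΨdag H φ (H k)
  have hconj (Y : Mat n) : uH H φ * Y * uH' H φ = conj Y := by
    simp [conj, u, ← star_uH hH]
  have hQ (k : Fin K) :
      Qφ G H θ φ k = (conj (Complex.I • (s * A k - A k * s)) ⊗ₖ (1 : Mat n)).mulVec (Γv n) := by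
    rw [Qφ, sqrtω, chanΨ_eq_conj_chanΨdag hH, hconj, hconj, map_smul, map_sub, map_mul, map_mul,
      smul_kronecker, smul_mulVec]
  have hψ : ψv G H θ φ = (conj s ⊗ₖ (1 : Mat n)).mulVec (Γv n) := by
    rw [ψv, sqrtω, hconj]
  rw [hQ, hQ, hψ, dotc2_conjStarAlgAut, dotc2_conjStarAlgAut, dotc2_conjStarAlgAut,
    ← sqrtρ_mul_self hG θ]
  exact IsHermitian.wignerYanase_commutator (isSelfAdjoint_sqrtρ hG θ)
    (isSelfAdjoint_chanΨdag hH φ (hH i).isSelfAdjoint)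
    (isSelfAdjoint_chanΨdag hH φ (hH j).isSelfAdjoint)

/-- Wigner–Yanase information matrix elements of the evolved quantum Boltzmann machine with
respect to the `φ` parameters: `I^WY_{ij}(φ) = −8 Tr[Ψ_φ†(H_j)√ρ(θ)Ψ_φ†(H_i)√ρ(θ)]
+ 4⟨{Ψ_φ†(H_i),Ψ_φ†(H_j)}⟩_{ρ(θ)}`. -/
theorem stmt14 {n J K : ℕ} (hn : 1 ≤ n) (hJ : 1 ≤ J) (hK : 1 ≤ K)
    (G : Fin J → Mat n) (H : Fin K → Mat n)
    (hG : ∀ j, (G j).IsHermitian) (hH : ∀ k, (H k).IsHermitian)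
    (θ : Fin J → ℝ) (φ : Fin K → ℝ)
    (i j : Fin K) :
    ((4 * (dotc2 (Qφ G H θ φ i) (Qφ G H θ φ j)
        - dotc2 (Qφ G H θ φ i) (ψv G H θ φ) * dotc2 (ψv G H θ φ) (Qφ G H θ φ j)).re : ℝ) : ℂ)
      = -8 * Matrix.trace (chanΨdag H φ (H j) * sqrtρ G θ * chanΨdag H φ (H i) * sqrtρ G θ)
        + 4 * Matrix.trace ((chanΨdag H φ (H i) * chanΨdag H φ (H j)
            + chanΨdag H φ (H j) * chanΨdag H φ (H i)) * qbm G θ) :=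
  stmt14_general G H hG hH θ φ i j

end
end

section
/- For every γ ∈ ℝ^L and i, j ∈ {1,…,L}: if the map ε ↦ −2·ln|⟨ψ(γ), ψ(γ+ε)⟩|² is twice continuously differentiable on a neighborhood of ε = 0, then its mixed second partial derivative ∂²/∂ε_i∂ε_j at ε = 0 equals 4·Re[⟨∂_iψ(γ), ∂_jψ(γ)⟩ − ⟨∂_iψ(γ), ψ(γ)⟩⟨ψ(γ), ∂_jψ(γ)⟩]. -/
open Matrix

noncomputable section

/-! Put `c s t = ⟨ψ γ, ψ (γ + s • e_i + t • e_j)⟩`, so that `c 0 0 = 1`. By the quotient rule the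
mixed derivative of `log ‖c‖²` at `0` is `2 Re (∂ₛ∂ₜc + conj (∂ₛc) ∂ₜc) - 4 Re ∂ₛc · Re ∂ₜc`.
Differentiating `⟨ψ, ψ⟩ = 1` gives `Re ⟨ψ, ∂ⱼψ⟩ = 0`, which kills the last term; differentiating
that identity once more gives `Re ⟨ψ, ∂ᵢ∂ⱼψ⟩ = -Re ⟨∂ᵢψ, ∂ⱼψ⟩`, which turns the first term into
the claimed one. -/

open InnerProductSpace ComplexConjugate Filter Topology

lemma dotc_eq_inner {n : ℕ} (x y : Fin n → ℂ) :
    dotc x y = ⟪WithLp.toLp 2 x, WithLp.toLp 2 y⟫_ℂ := by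
  simp [dotc, EuclideanSpace.inner_toLp_toLp, dotProduct, mul_comm]

lemma conj_dotc {n : ℕ} (x y : Fin n → ℂ) : conj (dotc x y) = dotc y x := by
  rw [dotc_eq_inner, dotc_eq_inner, inner_conj_symm]

lemma re_dotc_comm {n : ℕ} (x y : Fin n → ℂ) : (dotc y x).re = (dotc x y).re := by
  rw [← conj_dotc, Complex.conj_re]

lemma HasDerivAt.dotc {n : ℕ} {z y : ℝ → Fin n → ℂ} {z' y' : Fin n → ℂ} {t : ℝ}
    (hz : HasDerivAt z z' t) (hy : HasDerivAt y y' t) :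
    HasDerivAt (fun t => _root_.dotc (z t) (y t))
      (_root_.dotc z' (y t) + _root_.dotc (z t) y') t := by
  have toLp_comp {f : ℝ → Fin n → ℂ} {f'} (hf : HasDerivAt f f' t) :
      HasDerivAt (fun t => WithLp.toLp 2 (f t)) (WithLp.toLp 2 f') t :=
    (PiLp.continuousLinearEquiv 2 ℝ (fun _ : Fin n => ℂ)).symm.hasFDerivAt.comp_hasDerivAt t hf
  simpa only [dotc_eq_inner, add_comm] using (toLp_comp hz).inner ℂ (toLp_comp hy)

lemma HasDerivAt.const_dotc {n : ℕ} (x : Fin n → ℂ) {y : ℝ → Fin n → ℂ} {y' : Fin n → ℂ} {t : ℝ}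
    (hy : HasDerivAt y y' t) : HasDerivAt (fun t => _root_.dotc x (y t)) (_root_.dotc x y') t := by
  simpa [_root_.dotc] using (hasDerivAt_const t x).dotc hy

theorem re_dotc_add_re_dotc_eq_zero_of_re_dotc_const {n : ℕ} {z y : ℝ → Fin n → ℂ}
    {z' y' : Fin n → ℂ} {t C : ℝ} (hz : HasDerivAt z z' t) (hy : HasDerivAt y y' t)
    (hC : ∀ s, (dotc (z s) (y s)).re = C) :
    (dotc z' (y t)).re + (dotc (z t) y').re = 0 := by
  have h := Complex.reCLM.hasFDerivAt.comp_hasDerivAt t (hz.dotc hy)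
  simp only [Function.comp_def, Complex.reCLM_apply, hC, Complex.add_re] at h
  exact h.unique (hasDerivAt_const t C)

section UnitVectorFamily

variable {E : Type*} [NormedAddCommGroup E] [NormedSpace ℝ E] {n : ℕ} {ψ : E → Fin n → ℂ}

theorem re_dotc_fderiv_eq_zero (hψu : ∀ x, dotc (ψ x) (ψ x) = 1) {x : E}
    (hψ : DifferentiableAt ℝ ψ x) (v : E) : (dotc (ψ x) (fderiv ℝ ψ x v)).re = 0 := by
  have h := hψ.hasFDerivAt.hasLineDerivAt v
  have := re_dotc_add_re_dotc_eq_zero_of_re_dotc_const h h fun s => by rw [hψu, Complex.one_re]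
  simp only [zero_smul, add_zero, re_dotc_comm] at this
  linarith

theorem re_dotc_fderiv_fderiv_eq_neg (hψu : ∀ x, dotc (ψ x) (ψ x) = 1) (hψ : Differentiable ℝ ψ)
    {x : E} (u v : E) (hψ' : DifferentiableAt ℝ (fun y => fderiv ℝ ψ y v) x) :
    (dotc (ψ x) (fderiv ℝ (fun y => fderiv ℝ ψ y v) x u)).re
      = -(dotc (fderiv ℝ ψ x u) (fderiv ℝ ψ x v)).re := by
  have := re_dotc_add_re_dotc_eq_zero_of_re_dotc_const ((hψ x).hasFDerivAt.hasLineDerivAt u)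
    (hψ'.hasFDerivAt.hasLineDerivAt u) fun s => re_dotc_fderiv_eq_zero hψu (hψ _) v
  simp only [zero_smul, add_zero] at this
  linarith

end UnitVectorFamily

theorem hasDerivAt_log_norm_sq {F : Type*} [NormedAddCommGroup F] [InnerProductSpace ℝ F]
    {f : ℝ → F} {f' : F} {t : ℝ} (hf : HasDerivAt f f' t) (h0 : f t ≠ 0) :
    HasDerivAt (fun t => Real.log (‖f t‖ ^ 2)) (2 * ⟪f t, f'⟫_ℝ / ‖f t‖ ^ 2) t :=
  hf.norm_sq.log (by positivity)

theorem hasDerivAt_deriv_log_norm_sq {F : Type*} [NormedAddCommGroup F] [InnerProductSpace ℝ F]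
    {c : ℝ → ℝ → F} {b : ℝ → F} {a b' : F}
    (hc : ∀ s, HasDerivAt (c s) (b s) 0) (ha : HasDerivAt (fun s => c s 0) a 0)
    (hb : HasDerivAt b b' 0) (h00 : c 0 0 ≠ 0) :
    HasDerivAt (fun s => deriv (fun t => Real.log (‖c s t‖ ^ 2)) 0)
      ((2 * (⟪c 0 0, b'⟫_ℝ + ⟪a, b 0⟫_ℝ) * ‖c 0 0‖ ^ 2
        - 2 * ⟪c 0 0, b 0⟫_ℝ * (2 * ⟪c 0 0, a⟫_ℝ)) / (‖c 0 0‖ ^ 2) ^ 2) 0 := by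
  have hne : ∀ᶠ s in 𝓝 0, c s 0 ≠ 0 := ha.continuousAt.eventually_ne h00
  have hinner : (fun s => deriv (fun t => Real.log (‖c s t‖ ^ 2)) 0)
      =ᶠ[𝓝 0] fun s => 2 * ⟪c s 0, b s⟫_ℝ / ‖c s 0‖ ^ 2 :=
    hne.mono fun s hs => (hasDerivAt_log_norm_sq (hc s) hs).deriv
  refine HasDerivAt.congr_of_eventuallyEq ?_ hinner
  exact ((ha.inner ℝ hb).const_mul 2).div ha.norm_sq (by positivity)

theorem stmt19_general {n L : ℕ}
    (ψ : (Fin L → ℝ) → (Fin n → ℂ))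
    (hψC : ContDiff ℝ 2 ψ)
    (hψu : ∀ γ, dotc (ψ γ) (ψ γ) = 1)
    (γ : Fin L → ℝ) (i j : Fin L) :
    mixed2 (fun ε => -2 * Real.log (‖dotc (ψ γ) (ψ (γ + ε))‖ ^ 2)) i j
      = 4 * (dotc (fderiv ℝ ψ γ (stdBasis i)) (fderiv ℝ ψ γ (stdBasis j))
          - dotc (fderiv ℝ ψ γ (stdBasis i)) (ψ γ) * dotc (ψ γ) (fderiv ℝ ψ γ (stdBasis j))).re := by
  set e := stdBasis i
  set e' := stdBasis j
  have hψ : Differentiable ℝ ψ := hψC.differentiable (by norm_num)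
  have hψ' : Differentiable ℝ (fun x => fderiv ℝ ψ x e') :=
    ((hψC.fderiv_right le_rfl).clm_apply contDiff_const).differentiable one_ne_zero
  have hc : ∀ s : ℝ, HasDerivAt (fun t : ℝ => dotc (ψ γ) (ψ (γ + (s • e + t • e'))))
      (dotc (ψ γ) (fderiv ℝ ψ (γ + s • e) e')) 0 := fun s => by
    simpa only [add_assoc] using ((hψ (γ + s • e)).hasFDerivAt.hasLineDerivAt e').const_dotc (ψ γ)
  have ha : HasDerivAt (fun s : ℝ => dotc (ψ γ) (ψ (γ + (s • e + (0 : ℝ) • e'))))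
      (dotc (ψ γ) (fderiv ℝ ψ γ e)) 0 := by
    simpa only [zero_smul, add_zero] using ((hψ γ).hasFDerivAt.hasLineDerivAt e).const_dotc (ψ γ)
  have hb : HasDerivAt (fun s : ℝ => dotc (ψ γ) (fderiv ℝ ψ (γ + s • e) e'))
      (dotc (ψ γ) (fderiv ℝ (fun x => fderiv ℝ ψ x e') γ e)) 0 :=
    ((hψ' γ).hasFDerivAt.hasLineDerivAt e).const_dotc (ψ γ)
  have hmixed := hasDerivAt_deriv_log_norm_sq hc ha hb (by simp [hψu])
  unfold mixed2
  simp only [deriv_const_mul_field']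
  rw [hmixed.deriv]
  simp only [zero_smul, add_zero, hψu, norm_one, one_pow, mul_one, div_one, Complex.inner,
    map_one, conj_dotc]
  rw [re_dotc_fderiv_eq_zero hψu (hψ γ), re_dotc_fderiv_fderiv_eq_neg hψu hψ e e' (hψ' γ)]
  rw [Complex.sub_re, mul_comm (dotc (ψ γ) _)]
  ring

/-- The Fisher–Bures information of a pure-state family: the mixed second partial derivative
at `ε = 0` of `ε ↦ −2 ln |⟨ψ(γ), ψ(γ+ε)⟩|²` equals
`4 Re[⟨∂_iψ(γ), ∂_jψ(γ)⟩ − ⟨∂_iψ(γ), ψ(γ)⟩⟨ψ(γ), ∂_jψ(γ)⟩]`. -/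
theorem stmt19 {n L : ℕ} (hn : 1 ≤ n) (hL : 1 ≤ L)
    (ψ : (Fin L → ℝ) → (Fin n → ℂ))
    (hψC : ContDiff ℝ 2 ψ)
    (hψu : ∀ γ, dotc (ψ γ) (ψ γ) = 1)
    (γ : Fin L → ℝ) (i j : Fin L)
    (hC2 : ContDiffAt ℝ 2
      (fun ε : Fin L → ℝ => -2 * Real.log (‖dotc (ψ γ) (ψ (γ + ε))‖ ^ 2)) 0) :
    mixed2 (fun ε => -2 * Real.log (‖dotc (ψ γ) (ψ (γ + ε))‖ ^ 2)) i j
      = 4 * (dotc (fderiv ℝ ψ γ (stdBasis i)) (fderiv ℝ ψ γ (stdBasis j))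
          - dotc (fderiv ℝ ψ γ (stdBasis i)) (ψ γ) * dotc (ψ γ) (fderiv ℝ ψ γ (stdBasis j))).re :=
  stmt19_general ψ hψC hψu γ i j

end
end
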